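/- Let R = k[t^{a_1}, …, t^{a_n}] be a numerical semigroup ring with minimal multiplicity and let I be a homogeneous nonprincipal ideal of R with minimal homogeneous generating set x_1, …, x_m satisfying deg(x_1) < deg(x_2) < … < deg(x_m). Set y := t^{a_1}. Then y·B_1(I) ⊆ I·Z_1(I) if and only if y ∈ (x_1 : I). -/

import Mathlib

/-!
Write `e = a₁` and `S` for the semigroup. Minimal multiplicity (`e = n`) makes the generators the
least elements of the `e` residue classes modulo `e`, which gives `M + M = e + M` for
`M = S \ {0}`.

If `t^e xᵢ = rᵢ x₁` for all `i`, then the `σᵢ = t^e eᵢ - rᵢ e₁` are cycles, `xᵢ rⱼ = xⱼ rᵢ`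
because `x₁` is a nonzerodivisor, and hence `t^e (xᵢ eⱼ - xⱼ eᵢ) = xᵢ σⱼ - xⱼ σᵢ ∈ I Z₁`.

Conversely, minimality of the generators forces every cycle to have coordinates of order `≥ e`,
so in `t^e (x₁ eᵢ - xᵢ e₁) ∈ I Z₁` the coefficient of degree `e + d₁` in coordinate `i` comes
from a cycle `z` with `ord zᵢ = e`. The cycle relation in degree `e + dᵢ` then gives
`e + dᵢ ∈ d_l + M` with `l < i`, and induction on `i` together with `M + M = e + M` yields
`e + dᵢ ∈ d₁ + S`, i.e. `t^e xᵢ ∈ x₁ R`.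
-/

open Polynomial
open scoped Classical

set_option synthInstance.maxHeartbeats 1000000
set_option maxHeartbeats 1000000

universe u

/-- The numerical semigroup ring `k[t^{a_1}, …, t^{a_n}]`, realized as the `k`-subalgebra of the
polynomial ring `k[t]` (with `t = X`) generated by the monomials `t^{a_i}`. -/
noncomputable def nsRing (k : Type u) [Field k] {n : ℕ} (a : Fin n → ℕ) : Subalgebra k k[X] :=
  Algebra.adjoin k (Set.range fun i => (X : k[X]) ^ (a i))

/-- The element `t^{a_i}` of the numerical semigroup ring. -/
noncomputable def tpow (k : Type u) [Field k] {n : ℕ} (a : Fin n → ℕ) (i : Fin n) :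
    ↥(nsRing k a) :=
  ⟨(X : k[X]) ^ (a i), Algebra.subset_adjoin ⟨i, rfl⟩⟩

/-- An element of the numerical semigroup ring is homogeneous iff the underlying polynomial is a
monomial `c·t^d` (this includes `0`). -/
def IsHomogElt {k : Type u} [Field k] {n : ℕ} {a : Fin n → ℕ} (x : ↥(nsRing k a)) : Prop :=
  ∃ (c : k) (d : ℕ), (x : k[X]) = C c * X ^ d

/-- `0 ≤ d` and the polynomial is a *nonzero* monomial of degree exactly `d`, or the polynomial
is zero:  "homogeneous of degree `d`" with `ℤ`-valued degrees (used for graded shifts). -/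
def IsHomogOfDeg {k : Type u} [Field k] (x : k[X]) (d : ℤ) : Prop :=
  x = 0 ∨ (0 ≤ d ∧ ∃ c : k, c ≠ 0 ∧ x = C c * X ^ d.toNat)

/-- The hypotheses on the exponents of a numerical semigroup ring: positive, strictly
increasing, coprime, and minimally generating the numerical semigroup. -/
def NSGSetup {n : ℕ} (a : Fin n → ℕ) : Prop :=
  (∀ i, 0 < a i) ∧ StrictMono a ∧ (Finset.univ.gcd a = 1) ∧
    ∀ i, (a i) ∉ AddSubmonoid.closure (a '' {j | j ≠ i})

/-- The module `Z_1(I)` of first Koszul cycles on the generating set `x`: the kernel of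
`π : R^{⊕r} → R`, `e_i ↦ x_i`. -/
noncomputable def koszulZ1 {R : Type u} [CommRing R] {r : ℕ} (x : Fin r → R) :
    Submodule R (Fin r → R) :=
  LinearMap.ker (Fintype.linearCombination R x)

/-- The module `B_1(I)` of first Koszul boundaries on the generating set `x`: the submodule of
`R^{⊕r}` generated by the elements `x_i e_j − x_j e_i`. -/
noncomputable def koszulB1 {R : Type u} [CommRing R] {r : ℕ} (x : Fin r → R) :
    Submodule R (Fin r → R) :=
  Submodule.span R
    {z : Fin r → R | ∃ i j : Fin r, i < j ∧ z = Pi.single j (x i) - Pi.single i (x j)}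

lemma Ideal.span_range_comp_succAbove {R : Type*} [CommSemiring R] {m : ℕ}
    (x : Fin (m + 1) → R) (j : Fin (m + 1))
    (hj : x j ∈ Ideal.span (Set.range (x ∘ j.succAbove))) :
    Ideal.span (Set.range (x ∘ j.succAbove)) = Ideal.span (Set.range x) := by
  refine le_antisymm (Ideal.span_mono (Set.range_comp_subset_range _ _)) (Ideal.span_le.2 ?_)
  rintro _ ⟨i, rfl⟩
  rcases j.eq_self_or_eq_succAbove i with rfl | ⟨i, rfl⟩
  · exact hj
  · exact Ideal.subset_span ⟨i, rfl⟩

lemma Polynomial.coeff_mul_add_of_X_pow_dvd {R : Type*} [CommSemiring R] {p q : R[X]}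
    {d e : ℕ} (hp : X ^ d ∣ p) (hq : X ^ e ∣ q) :
    (p * q).coeff (d + e) = p.coeff d * q.coeff e := by
  obtain ⟨p, rfl⟩ := hp
  obtain ⟨q, rfl⟩ := hq
  rw [mul_mul_mul_comm, ← pow_add]
  simp only [coeff_X_pow_mul', le_refl, if_true, Nat.sub_self, mul_coeff_zero]

section Koszul

variable {m : ℕ}

lemma exists_coeff_ne_zero_of_mem_smul {R : Type*} [CommSemiring R] {A : Subalgebra R R[X]}
    {I : Ideal A} {N : Submodule A (Fin m → A)} {d e : ℕ}
    (hI : ∀ f ∈ I, X ^ d ∣ (f : R[X])) (hN : ∀ z ∈ N, ∀ i, X ^ e ∣ (z i : R[X]))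
    {v : Fin m → A} (hv : v ∈ I • N) {i : Fin m} (hvi : (v i : R[X]).coeff (d + e) ≠ 0) :
    ∃ z ∈ N, (z i : R[X]).coeff e ≠ 0 := by
  refine Submodule.smul_induction_on (p := fun v => (v i : R[X]).coeff (d + e) ≠ 0 →
    ∃ z ∈ N, (z i : R[X]).coeff e ≠ 0) hv (fun f hf z hz hvi => ?_) (fun v w ihv ihw hvi => ?_) hvi
  · rw [Pi.smul_apply, smul_eq_mul, MulMemClass.coe_mul,
      coeff_mul_add_of_X_pow_dvd (hI f hf) (hN z hz i)] at hvi
    exact ⟨z, hz, right_ne_zero_of_mul hvi⟩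
  · rw [Pi.add_apply, AddMemClass.coe_add, coeff_add] at hvi
    by_cases h : (v i : R[X]).coeff (d + e) = 0
    · exact ihw (by rwa [h, zero_add] at hvi)
    · exact ihv h

lemma exists_coeff_ne_zero_of_mem_koszulZ1 {k : Type u} [Field k] {A : Subalgebra k k[X]}
    {x : Fin m → A} {c : Fin m → k} {d : Fin m → ℕ}
    (hx : ∀ i, (x i : k[X]) = C (c i) * X ^ d i) (hc : ∀ i, c i ≠ 0) {z : Fin m → A}
    (hz : z ∈ koszulZ1 x) {j : Fin m} {D : ℕ} (hD : (z j : k[X]).coeff D ≠ 0) :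
    ∃ l ≠ j, ∃ D', D' + d l = D + d j ∧ (z l : k[X]).coeff D' ≠ 0 := by
  have hsum : ∑ l, ((z l : k[X]) * monomial (d l) (c l)).coeff (D + d j) = 0 := by
    rw [koszulZ1, LinearMap.mem_ker, Fintype.linearCombination_apply] at hz
    simp_rw [← finsetSum_coeff, ← C_mul_X_pow_eq_monomial, ← hx]
    simpa using congrArg (fun p : A => (p : k[X]).coeff (D + d j)) hz
  by_contra! h
  rw [Finset.sum_eq_single j (fun l _ hlj => ?_) (by simp), coeff_mul_monomial] at hsum
  · exact mul_ne_zero hD (hc j) hsum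
  rw [← C_mul_X_pow_eq_monomial, ← mul_assoc, coeff_mul_X_pow']
  split_ifs with hle
  · rw [coeff_mul_C, h l hlj _ (Nat.sub_add_cancel hle), zero_mul]
  · rfl

theorem smul_koszulB1_le_of_mem_colon {R : Type u} [CommRing R] (x : Fin m → R) {j : Fin m}
    (hj : x j ∈ nonZeroDivisors R) {y : R}
    (hy : y ∈ (Ideal.span {x j}).colon (Ideal.span (Set.range x) : Set R)) :
    Ideal.span {y} • koszulB1 x ≤ Ideal.span (Set.range x) • koszulZ1 x := by
  simp only [Ideal.colon_span, Submodule.mem_colon, Set.forall_mem_range, smul_eq_mul] at hy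
  choose r hr using fun p => Ideal.mem_span_singleton'.1 (hy p)
  have hσ : ∀ p, Pi.single p y - Pi.single j (r p) ∈ koszulZ1 x := fun p => by
    rw [koszulZ1, LinearMap.mem_ker, map_sub, Fintype.linearCombination_apply_single,
      Fintype.linearCombination_apply_single, smul_eq_mul, smul_eq_mul, hr, sub_self]
  have hr_comm : ∀ p q, x p * r q = x q * r p := fun p q => by
    refine sub_eq_zero.1 ((mem_nonZeroDivisors_iff.1 hj).2 _ ?_)
    rw [sub_mul, mul_assoc, mul_assoc, hr, hr]
    ring
  rw [Submodule.ideal_span_singleton_smul, koszulB1, Submodule.smul_span, Submodule.span_le]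
  rintro _ ⟨_, ⟨p, q, -, rfl⟩, rfl⟩
  have hexpand : y • (Pi.single q (x p) - Pi.single p (x q) : Fin m → R) =
      x p • (Pi.single q y - Pi.single j (r q)) - x q • (Pi.single p y - Pi.single j (r p)) := by
    simp only [smul_sub, ← Pi.single_smul', smul_eq_mul, hr_comm p q, mul_comm y]
    abel
  dsimp only
  rw [SetLike.mem_coe, hexpand]
  exact sub_mem (Submodule.smul_mem_smul (Ideal.subset_span ⟨p, rfl⟩) (hσ q))
    (Submodule.smul_mem_smul (Ideal.subset_span ⟨q, rfl⟩) (hσ p))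

end Koszul

section NumericalSemigroup

variable {n : ℕ} {a : Fin n → ℕ}

lemma apply_zero_le_of_mem_closure (ha : Monotone a) (hn : 0 < n) {s : ℕ}
    (hs : s ∈ AddSubmonoid.closure (Set.range a)) (hs0 : s ≠ 0) : a ⟨0, hn⟩ ≤ s := by
  induction hs using AddSubmonoid.closure_induction with
  | mem _ h => obtain ⟨i, rfl⟩ := h; exact ha (Fin.le_def.2 (Nat.zero_le _))
  | zero => exact absurd rfl hs0
  | add p q _ _ ihp ihq =>
    rcases Nat.eq_zero_or_pos p with rfl | hp
    · simpa using ihq (by simpa using hs0)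
    · have := ihp hp.ne'
      omega

lemma mem_closure_image_Iio_of_lt (ha : Monotone a) {s : ℕ} {l : Fin n}
    (hs : s ∈ AddSubmonoid.closure (Set.range a)) (hsl : s < a l) :
    s ∈ AddSubmonoid.closure (a '' Set.Iio l) := by
  induction hs using AddSubmonoid.closure_induction with
  | mem _ h =>
    obtain ⟨i, rfl⟩ := h
    exact AddSubmonoid.subset_closure ⟨i, ha.reflect_lt hsl, rfl⟩
  | zero => exact zero_mem _
  | add p q _ _ ihp ihq => exact add_mem (ihp (by omega)) (ihq (by omega))

lemma apply_notMem_closure_image_Iio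
    (hmingen : ∀ i, a i ∉ AddSubmonoid.closure (a '' {j | j ≠ i})) (l : Fin n) :
    a l ∉ AddSubmonoid.closure (a '' Set.Iio l) := fun h =>
  hmingen l <| AddSubmonoid.closure_mono (Set.image_mono fun _ hj => ne_of_lt hj) h

lemma apply_le_of_modEq (ha : Monotone a)
    (hmingen : ∀ i, a i ∉ AddSubmonoid.closure (a '' {j | j ≠ i})) (hn : 0 < n) {s : ℕ}
    {l : Fin n} (hs : s ∈ AddSubmonoid.closure (Set.range a)) (hs0 : s ≠ 0)
    (hsl : s ≡ a l [MOD a ⟨0, hn⟩]) : a l ≤ s := by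
  by_contra! hlt
  rcases eq_or_ne l ⟨0, hn⟩ with rfl | hl0
  · exact hlt.not_ge (apply_zero_le_of_mem_closure ha hn hs hs0)
  obtain ⟨c, hc⟩ := (Nat.modEq_iff_dvd' hlt.le).1 hsl
  refine apply_notMem_closure_image_Iio hmingen l ?_
  have h0l : (⟨0, hn⟩ : Fin n) < l := lt_of_le_of_ne (Fin.le_def.2 (Nat.zero_le _)) hl0.symm
  rw [show a l = s + c • a ⟨0, hn⟩ by rw [smul_eq_mul, mul_comm, ← hc]; omega]
  exact add_mem (mem_closure_image_Iio_of_lt ha hs hlt)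
    (nsmul_mem (AddSubmonoid.subset_closure (Set.mem_image_of_mem a h0l)) c)

lemma exists_modEq_apply (hpos : ∀ i, 0 < a i) (ha : StrictMono a)
    (hmingen : ∀ i, a i ∉ AddSubmonoid.closure (a '' {j | j ≠ i})) (hn : 0 < n)
    (hmult : a ⟨0, hn⟩ = n) (s : ℕ) : ∃ l, s ≡ a l [MOD a ⟨0, hn⟩] := by
  have : NeZero (a ⟨0, hn⟩) := ⟨(hpos _).ne'⟩
  have hinj : Function.Injective fun l : Fin n => (a l : ZMod (a ⟨0, hn⟩)) := by
    intro l l' h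
    have hle : ∀ {i j : Fin n}, (a i : ZMod (a ⟨0, hn⟩)) = a j → a j ≤ a i := fun h =>
      apply_le_of_modEq ha.monotone hmingen hn (AddSubmonoid.subset_closure ⟨_, rfl⟩)
        (hpos _).ne' ((ZMod.natCast_eq_natCast_iff _ _ _).1 h)
    exact ha.injective (le_antisymm (hle h.symm) (hle h))
  have hsurj := ((Fintype.bijective_iff_injective_and_card _).2
    ⟨hinj, by rw [ZMod.card, Fintype.card_fin, hmult]⟩).2
  obtain ⟨l, hl⟩ := hsurj s
  exact ⟨l, ((ZMod.natCast_eq_natCast_iff _ _ _).1 hl).symm⟩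

lemma exists_add_eq_apply_zero_add (hpos : ∀ i, 0 < a i) (ha : StrictMono a)
    (hmingen : ∀ i, a i ∉ AddSubmonoid.closure (a '' {j | j ≠ i})) (hn : 0 < n)
    (hmult : a ⟨0, hn⟩ = n) {s₁ s₂ : ℕ}
    (h₁ : s₁ ∈ AddSubmonoid.closure (Set.range a)) (h₂ : s₂ ∈ AddSubmonoid.closure (Set.range a))
    (h₁0 : s₁ ≠ 0) (h₂0 : s₂ ≠ 0) :
    ∃ s ∈ AddSubmonoid.closure (Set.range a), s ≠ 0 ∧ s₁ + s₂ = a ⟨0, hn⟩ + s := by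
  obtain ⟨l, hl⟩ := exists_modEq_apply hpos ha hmingen hn hmult (s₁ + s₂)
  have hle := apply_le_of_modEq ha.monotone hmingen hn (add_mem h₁ h₂) (by omega) hl
  have hlt : a l < s₁ + s₂ := by
    refine lt_of_le_of_ne hle fun heq => apply_notMem_closure_image_Iio hmingen l ?_
    rw [heq]
    exact add_mem (mem_closure_image_Iio_of_lt ha.monotone h₁ (by omega))
      (mem_closure_image_Iio_of_lt ha.monotone h₂ (by omega))
  obtain ⟨c, hc⟩ := (Nat.modEq_iff_dvd' hle).1 hl.symm
  rcases c with _ | c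
  · omega
  refine ⟨a l + c • a ⟨0, hn⟩, add_mem (AddSubmonoid.subset_closure ⟨l, rfl⟩)
    (nsmul_mem (AddSubmonoid.subset_closure (Set.mem_range_self _)) c),
    by have := hpos l; omega, ?_⟩
  rw [Nat.eq_add_of_sub_eq hle hc, smul_eq_mul]
  ring

end NumericalSemigroup

section SemigroupRing

variable {k : Type u} [Field k] {n : ℕ} {a : Fin n → ℕ}

lemma IsHomogElt.coe_eq_C_leadingCoeff_mul_X_pow {x : nsRing k a} (hx : IsHomogElt x) :
    (x : k[X]) = C (x : k[X]).leadingCoeff * X ^ (x : k[X]).natDegree := by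
  obtain ⟨c, d, h⟩ := hx
  rcases eq_or_ne c 0 with rfl | hc
  · simp [h]
  · rw [h, leadingCoeff_C_mul_X_pow, natDegree_C_mul_X_pow _ _ hc]

lemma mem_closure_of_coeff_ne_zero {r : k[X]} (hr : r ∈ nsRing k a) {e : ℕ}
    (he : r.coeff e ≠ 0) : e ∈ AddSubmonoid.closure (Set.range a) := by
  induction hr using Algebra.adjoin_induction generalizing e with
  | mem p hp =>
    obtain ⟨i, rfl⟩ := hp
    rw [coeff_X_pow] at he
    split_ifs at he with h
    · exact h ▸ AddSubmonoid.subset_closure ⟨i, rfl⟩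
    · exact absurd rfl he
  | algebraMap r =>
    rw [algebraMap_eq, coeff_C] at he
    split_ifs at he with h
    · exact h ▸ zero_mem _
    · exact absurd rfl he
  | add p q _ _ ihp ihq =>
    rw [coeff_add] at he
    by_cases h : p.coeff e = 0
    · exact ihq (by rwa [h, zero_add] at he)
    · exact ihp h
  | mul p q _ _ ihp ihq =>
    rw [coeff_mul] at he
    obtain ⟨⟨u, v⟩, huv, hne⟩ := Finset.exists_ne_zero_of_sum_ne_zero he
    rw [Finset.HasAntidiagonal.mem_antidiagonal] at huv
    exact huv ▸ add_mem (ihp (left_ne_zero_of_mul hne)) (ihq (right_ne_zero_of_mul hne))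

lemma C_mul_X_pow_mem_nsRing (c : k) {e : ℕ} (he : e ∈ AddSubmonoid.closure (Set.range a)) :
    C c * X ^ e ∈ nsRing k a := by
  rw [← smul_eq_C_mul]
  refine Subalgebra.smul_mem _ ?_ c
  induction he using AddSubmonoid.closure_induction with
  | mem _ h => obtain ⟨i, rfl⟩ := h; exact Algebra.subset_adjoin ⟨i, rfl⟩
  | zero => rw [pow_zero]; exact one_mem _
  | add p q _ _ ihp ihq => rw [pow_add]; exact mul_mem ihp ihq

lemma mem_span_singleton_of_eq_C_mul_X_pow {u v : nsRing k a} {c c' : k} {s d : ℕ}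
    (hu : (u : k[X]) = C c * X ^ (s + d)) (hv : (v : k[X]) = C c' * X ^ d) (hc' : c' ≠ 0)
    (hs : s ∈ AddSubmonoid.closure (Set.range a)) : u ∈ Ideal.span {v} := by
  refine Ideal.mem_span_singleton'.2 ⟨⟨C (c / c') * X ^ s, C_mul_X_pow_mem_nsRing _ hs⟩, ?_⟩
  apply Subtype.ext
  change C (c / c') * X ^ s * (v : k[X]) = (u : k[X])
  rw [hu, hv, pow_add, mul_mul_mul_comm, ← C_mul, div_mul_cancel₀ c hc']

lemma X_pow_dvd_of_coeff_zero_eq_zero (ha : Monotone a) (hn : 0 < n) {r : k[X]}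
    (hr : r ∈ nsRing k a) (hr0 : r.coeff 0 = 0) : X ^ a ⟨0, hn⟩ ∣ r := by
  refine X_pow_dvd_iff.2 fun e he => by_contra fun hre => ?_
  have := apply_zero_le_of_mem_closure ha hn (mem_closure_of_coeff_ne_zero hr hre)
    (by rintro rfl; exact hre hr0)
  omega

end SemigroupRing

section MinimalMultiplicity

variable {k : Type u} [Field k] {n : ℕ} {a : Fin n → ℕ} {m : ℕ} {x : Fin m → nsRing k a}
  {c : Fin m → k} {d : Fin m → ℕ}

lemma coeff_zero_eq_zero_of_mem_koszulZ1 (hx : ∀ i, (x i : k[X]) = C (c i) * X ^ d i)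
    (hc : ∀ i, c i ≠ 0)
    (hmin : ∀ (s : ℕ) (w : Fin s → nsRing k a),
      Ideal.span (Set.range w) = Ideal.span (Set.range x) → m ≤ s)
    {z : Fin m → nsRing k a} (hz : z ∈ koszulZ1 x) (j : Fin m) : (z j : k[X]).coeff 0 = 0 := by
  by_contra h0
  obtain ⟨l, hlj, D, hD, hl⟩ := exists_coeff_ne_zero_of_mem_koszulZ1 hx hc hz h0
  have hxj : x j ∈ Ideal.span {x l} := mem_span_singleton_of_eq_C_mul_X_pow
    (by rw [hx j, hD, zero_add]) (hx l) (hc l) (mem_closure_of_coeff_ne_zero (z l).2 hl)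
  cases m with
  | zero => exact j.elim0
  | succ m =>
    obtain ⟨l, rfl⟩ := Fin.exists_succAbove_eq hlj
    have := hmin m (x ∘ j.succAbove) <| Ideal.span_range_comp_succAbove x j <|
      Ideal.span_mono (Set.singleton_subset_iff.2 (Set.mem_range_self l)) hxj
    omega

lemma exists_lt_of_smul_koszulB1_le (ha : Monotone a) (hn : 0 < n) (hm : 0 < m)
    (hx : ∀ i, (x i : k[X]) = C (c i) * X ^ d i) (hc : ∀ i, c i ≠ 0) (hd : StrictMono d)
    (hmin : ∀ (s : ℕ) (w : Fin s → nsRing k a),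
      Ideal.span (Set.range w) = Ideal.span (Set.range x) → m ≤ s)
    (H : Ideal.span {tpow k a ⟨0, hn⟩} • koszulB1 x ≤ Ideal.span (Set.range x) • koszulZ1 x)
    {i : Fin m} (hi : ⟨0, hm⟩ < i) :
    ∃ l, d l < d i ∧ ∃ s ∈ AddSubmonoid.closure (Set.range a), s ≠ 0 ∧
      a ⟨0, hn⟩ + d i = d l + s := by
  have hI : Ideal.span (Set.range x) ≤ (Ideal.span {X ^ d ⟨0, hm⟩}).comap (nsRing k a).val := by
    rw [Ideal.span_le, Set.range_subset_iff]
    intro p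
    rw [SetLike.mem_coe, Ideal.mem_comap, Ideal.mem_span_singleton, Subalgebra.coe_val, hx p]
    exact (pow_dvd_pow X (hd.monotone (Fin.le_def.2 (Nat.zero_le _)))).mul_left _
  have hN : ∀ z ∈ koszulZ1 x, ∀ i, X ^ a ⟨0, hn⟩ ∣ (z i : k[X]) := fun z hz i =>
    X_pow_dvd_of_coeff_zero_eq_zero ha hn (z i).2
      (coeff_zero_eq_zero_of_mem_koszulZ1 hx hc hmin hz i)
  let b : Fin m → nsRing k a := Pi.single i (x ⟨0, hm⟩) - Pi.single ⟨0, hm⟩ (x i)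
  have hv := H (Submodule.smul_mem_smul (Ideal.mem_span_singleton_self _)
    (Submodule.subset_span ⟨_, _, hi, rfl⟩ : b ∈ koszulB1 x))
  have hvi : ((tpow k a ⟨0, hn⟩ • b) i : k[X]).coeff (d ⟨0, hm⟩ + a ⟨0, hn⟩) ≠ 0 := by
    have hbi : b i = x ⟨0, hm⟩ := by simp [b, hi.ne']
    rw [Pi.smul_apply, hbi, smul_eq_mul, MulMemClass.coe_mul, hx, tpow, mul_left_comm, ← pow_add,
      add_comm, coeff_C_mul_X_pow, if_pos rfl]
    exact hc _
  obtain ⟨z, hz, hzi⟩ := exists_coeff_ne_zero_of_mem_smul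
    (fun f hf => Ideal.mem_span_singleton.1 (hI hf)) hN hv hvi
  obtain ⟨l, hli, s, hs, hzl⟩ := exists_coeff_ne_zero_of_mem_koszulZ1 hx hc hz hzi
  have hs0 : s ≠ 0 := by
    rintro rfl
    exact hzl (coeff_zero_eq_zero_of_mem_koszulZ1 hx hc hmin hz l)
  have hsS := mem_closure_of_coeff_ne_zero (z l).2 hzl
  have hes := apply_zero_le_of_mem_closure ha hn hsS hs0
  exact ⟨l, lt_of_le_of_ne (by omega) (hd.injective.ne hli), s, hsS, hs0, by omega⟩

lemma exists_add_eq_of_smul_koszulB1_le (hpos : ∀ i, 0 < a i) (ha : StrictMono a)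
    (hmingen : ∀ i, a i ∉ AddSubmonoid.closure (a '' {j | j ≠ i})) (hn : 0 < n)
    (hmult : a ⟨0, hn⟩ = n) (hm : 0 < m) (hx : ∀ i, (x i : k[X]) = C (c i) * X ^ d i)
    (hc : ∀ i, c i ≠ 0) (hd : StrictMono d)
    (hmin : ∀ (s : ℕ) (w : Fin s → nsRing k a),
      Ideal.span (Set.range w) = Ideal.span (Set.range x) → m ≤ s)
    (H : Ideal.span {tpow k a ⟨0, hn⟩} • koszulB1 x ≤ Ideal.span (Set.range x) • koszulZ1 x)
    (i : Fin m) :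
    ∃ s ∈ AddSubmonoid.closure (Set.range a), a ⟨0, hn⟩ + d i = d ⟨0, hm⟩ + s := by
  induction i using WellFoundedLT.induction with
  | _ i ih =>
  rcases (Fin.le_def.2 (Nat.zero_le _) : (⟨0, hm⟩ : Fin m) ≤ i).eq_or_lt with rfl | hi
  · exact ⟨_, AddSubmonoid.subset_closure (Set.mem_range_self _), add_comm _ _⟩
  obtain ⟨l, hl, s, hs, hs0, hsl⟩ :=
    exists_lt_of_smul_koszulB1_le ha.monotone hn hm hx hc hd hmin H hi
  obtain ⟨s', hs', hs'l⟩ := ih l (hd.lt_iff_lt.1 hl)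
  have hs'0 : s' ≠ 0 := by
    have := hd.monotone (Fin.le_def.2 (Nat.zero_le l) : (⟨0, hm⟩ : Fin m) ≤ l)
    have := hpos ⟨0, hn⟩
    omega
  obtain ⟨t, ht, -, hst⟩ := exists_add_eq_apply_zero_add hpos ha hmingen hn hmult hs hs' hs0 hs'0
  exact ⟨t, ht, by omega⟩

lemma mem_colon_of_smul_koszulB1_le (hpos : ∀ i, 0 < a i) (ha : StrictMono a)
    (hmingen : ∀ i, a i ∉ AddSubmonoid.closure (a '' {j | j ≠ i})) (hn : 0 < n)
    (hmult : a ⟨0, hn⟩ = n) (hm : 0 < m) (hx : ∀ i, (x i : k[X]) = C (c i) * X ^ d i)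
    (hc : ∀ i, c i ≠ 0) (hd : StrictMono d)
    (hmin : ∀ (s : ℕ) (w : Fin s → nsRing k a),
      Ideal.span (Set.range w) = Ideal.span (Set.range x) → m ≤ s)
    (H : Ideal.span {tpow k a ⟨0, hn⟩} • koszulB1 x ≤ Ideal.span (Set.range x) • koszulZ1 x) :
    tpow k a ⟨0, hn⟩ ∈
      (Ideal.span {x ⟨0, hm⟩}).colon (Ideal.span (Set.range x) : Set (nsRing k a)) := by
  rw [Ideal.colon_span, Submodule.mem_colon, Set.forall_mem_range]
  intro p
  obtain ⟨s, hs, hsp⟩ :=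
    exists_add_eq_of_smul_koszulB1_le hpos ha hmingen hn hmult hm hx hc hd hmin H p
  refine mem_span_singleton_of_eq_C_mul_X_pow (c := c p) ?_ (hx _) (hc _) hs
  rw [smul_eq_mul, MulMemClass.coe_mul, hx, tpow, mul_left_comm, ← pow_add, add_comm s, ← hsp]

end MinimalMultiplicity

theorem smul_boundaries_iff_mem_colon {k : Type u} [Field k] {n : ℕ} (a : Fin n → ℕ)
    (hsetup : NSGSetup a) (hn : 0 < n)
    (hminmult : a ⟨0, hn⟩ = n)
    (I : Ideal ↥(nsRing k a))
    {m : ℕ} (hm : 0 < m) (x : Fin m → ↥(nsRing k a))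
    (hhom : ∀ i, IsHomogElt (x i)) (hne : ∀ i, x i ≠ 0)
    (hdeg : StrictMono fun i => ((x i : k[X]).natDegree))
    (hgen : Ideal.span (Set.range x) = I)
    (hmin : ∀ (s : ℕ) (w : Fin s → ↥(nsRing k a)), Ideal.span (Set.range w) = I → m ≤ s) :
    (Ideal.span {tpow k a ⟨0, hn⟩}) • koszulB1 x ≤ I • koszulZ1 x ↔
      tpow k a ⟨0, hn⟩ ∈ (Ideal.span {x ⟨0, hm⟩}).colon I := by
  subst hgen
  obtain ⟨hpos, ha, -, hmingen⟩ := hsetup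
  have hx i := (hhom i).coe_eq_C_leadingCoeff_mul_X_pow
  have hc i : (x i : k[X]).leadingCoeff ≠ 0 :=
    leadingCoeff_ne_zero.2 (Subtype.coe_ne_coe.2 (hne i))
  exact ⟨mem_colon_of_smul_koszulB1_le hpos ha hmingen hn hminmult hm hx hc hdeg hmin,
    smul_koszulB1_le_of_mem_colon x (mem_nonZeroDivisors_of_ne_zero (hne _))⟩
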